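/- arXiv:1804.11282 — 2 statements merged into one kernel-verified Lean document; each statement's English description precedes it below -/
import Mathlib

section
/- Let ω > 0, Λ > 0 and ξ > ωΛ be real numbers, and let 0 < r_p < r_a be the positive reals whose squares are the two roots of ω²u² − 2ξu + Λ² = 0 (so r_p² + r_a² = 2ξ/ω² and r_p²·r_a² = Λ²/ω²). Then the harmonic radial action satisfies (1/π)·∫_{r_p}^{r_a} √(2ξ − ω²r² − Λ²/r²) dr = ξ/(2ω) − Λ/2. -/
/-!
By Vieta, `ω²(r_p² + r_a²) = 2ξ` and `ω r_p r_a = Λ`, so the radicand factors as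
`(ω/r)² (r_a² - r²)(r² - r_p²)` and the action is
`(ω/π) ∫_{r_p}^{r_a} √((r_a² - r²)(r² - r_p²)) / r dr`.
This integral has an elementary primitive, a square root plus two arcsines (of an affine function
of `r²` and of `1/r²`) that run from `-π/2` to `π/2`, and equals `π (r_a - r_p)² / 4`. Finally
`ω (r_a - r_p)² / 4 = ω (r_p² + r_a²) / 4 - ω r_p r_a / 2 = ξ / (2ω) - Λ / 2`.
-/

open intervalIntegral Real Set

theorem HasDerivAt.arcsin_of_one_sub_sq_eq {f : ℝ → ℝ} {f' c x : ℝ} (hf : HasDerivAt f f' x)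
    (hc : 0 < c) (h : 1 - f x ^ 2 = c ^ 2) : HasDerivAt (fun y => arcsin (f y)) (f' / c) x := by
  have hlt : f x ^ 2 < 1 := by nlinarith
  have hne₁ : f x ≠ -1 := by rintro h; rw [h] at hlt; norm_num at hlt
  have hne₂ : f x ≠ 1 := by rintro h; rw [h] at hlt; norm_num at hlt
  refine ((hasDerivAt_arcsin hne₁ hne₂).comp x hf).congr_deriv ?_
  rw [h, sqrt_sq hc.le]
  ring

theorem vieta_of_ne {A B C a b : ℝ} (hab : a ≠ b) (ha : A * a ^ 2 - B * a + C = 0)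
    (hb : A * b ^ 2 - B * b + C = 0) : A * (a + b) = B ∧ A * (a * b) = C := by
  have hsum : A * (a + b) = B := by
    have h : (a - b) * (A * (a + b) - B) = 0 := by linear_combination ha - hb
    linear_combination (mul_eq_zero.1 h).resolve_left (sub_ne_zero.2 hab)
  exact ⟨hsum, by linear_combination b * hsum - hb⟩

section Shell

variable {p q x : ℝ}

noncomputable def shellPrimitive (p q r : ℝ) : ℝ :=
  (√((q ^ 2 - r ^ 2) * (r ^ 2 - p ^ 2))
    - p * q * arcsin ((p ^ 2 + q ^ 2 - 2 * p ^ 2 * q ^ 2 / r ^ 2) / (q ^ 2 - p ^ 2))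
    + (p ^ 2 + q ^ 2) / 2 * arcsin ((2 * r ^ 2 - p ^ 2 - q ^ 2) / (q ^ 2 - p ^ 2))) / 2

theorem shell_pos (hp : 0 < p) (hpx : p < x) (hxq : x < q) :
    0 < (q ^ 2 - x ^ 2) * (x ^ 2 - p ^ 2) := by
  have : p ^ 2 < x ^ 2 := by nlinarith
  have : x ^ 2 < q ^ 2 := by nlinarith
  nlinarith

theorem hasDerivAt_sqrt_shell (hP : 0 < (q ^ 2 - x ^ 2) * (x ^ 2 - p ^ 2)) :
    HasDerivAt (fun r => √((q ^ 2 - r ^ 2) * (r ^ 2 - p ^ 2)))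
      (x * (p ^ 2 + q ^ 2 - 2 * x ^ 2) / √((q ^ 2 - x ^ 2) * (x ^ 2 - p ^ 2))) x := by
  refine ((((hasDerivAt_pow 2 x).const_sub (q ^ 2)).fun_mul
    ((hasDerivAt_pow 2 x).sub_const (p ^ 2))).sqrt hP.ne').congr_deriv ?_
  field_simp
  norm_num
  ring

theorem hasDerivAt_arcsin_shell_linear (hp : 0 < p) (hpx : p < x) (hxq : x < q) :
    HasDerivAt (fun r => arcsin ((2 * r ^ 2 - p ^ 2 - q ^ 2) / (q ^ 2 - p ^ 2)))
      (2 * x / √((q ^ 2 - x ^ 2) * (x ^ 2 - p ^ 2))) x := by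
  have hP := shell_pos hp hpx hxq
  have hd : 0 < q ^ 2 - p ^ 2 := by nlinarith
  have hg := ((((hasDerivAt_pow 2 x).const_mul 2).sub_const (p ^ 2)).sub_const (q ^ 2)).div_const
      (q ^ 2 - p ^ 2)
  have hsq : 1 - ((2 * x ^ 2 - p ^ 2 - q ^ 2) / (q ^ 2 - p ^ 2)) ^ 2
      = (2 * √((q ^ 2 - x ^ 2) * (x ^ 2 - p ^ 2)) / (q ^ 2 - p ^ 2)) ^ 2 := by
    rw [div_pow, div_pow, mul_pow, sq_sqrt hP.le]
    field_simp
    ring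
  refine (hg.arcsin_of_one_sub_sq_eq (by positivity) hsq).congr_deriv ?_
  field_simp
  norm_num

theorem hasDerivAt_arcsin_shell_inverse (hp : 0 < p) (hpx : p < x) (hxq : x < q) :
    HasDerivAt
      (fun r => arcsin ((p ^ 2 + q ^ 2 - 2 * p ^ 2 * q ^ 2 / r ^ 2) / (q ^ 2 - p ^ 2)))
      (2 * p * q / (x * √((q ^ 2 - x ^ 2) * (x ^ 2 - p ^ 2)))) x := by
  have hP := shell_pos hp hpx hxq
  have hx : 0 < x := hp.trans hpx
  have hq : 0 < q := hx.trans hxq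
  have hd : 0 < q ^ 2 - p ^ 2 := by nlinarith
  have hg := (((hasDerivAt_const x (2 * p ^ 2 * q ^ 2)).fun_div (hasDerivAt_pow 2 x)
      (by positivity)).const_sub (p ^ 2 + q ^ 2)).div_const (q ^ 2 - p ^ 2)
  have hsq : 1 - ((p ^ 2 + q ^ 2 - 2 * p ^ 2 * q ^ 2 / x ^ 2) / (q ^ 2 - p ^ 2)) ^ 2
      = (2 * p * q * √((q ^ 2 - x ^ 2) * (x ^ 2 - p ^ 2)) / ((q ^ 2 - p ^ 2) * x ^ 2)) ^ 2 := by
    rw [div_pow, div_pow, mul_pow (2 * p * q), sq_sqrt hP.le]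
    field_simp
    ring
  refine (hg.arcsin_of_one_sub_sq_eq (by positivity) hsq).congr_deriv ?_
  field_simp
  norm_num
  ring

theorem hasDerivAt_shellPrimitive (hp : 0 < p) (hpx : p < x) (hxq : x < q) :
    HasDerivAt (shellPrimitive p q) (√((q ^ 2 - x ^ 2) * (x ^ 2 - p ^ 2)) / x) x := by
  have hP := shell_pos hp hpx hxq
  have hx : 0 < x := hp.trans hpx
  refine ((((hasDerivAt_sqrt_shell hP).sub
    ((hasDerivAt_arcsin_shell_inverse hp hpx hxq).const_mul (p * q))).add
    ((hasDerivAt_arcsin_shell_linear hp hpx hxq).const_mul ((p ^ 2 + q ^ 2) / 2))).div_const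
    2).congr_deriv ?_
  field_simp
  linear_combination (-2) * sq_sqrt hP.le

theorem continuousOn_shellPrimitive (hp : 0 < p) :
    ContinuousOn (shellPrimitive p q) (Icc p q) := by
  have hr : ∀ r ∈ Icc p q, r ^ 2 ≠ 0 := fun r hr => pow_ne_zero 2 (hp.trans_le hr.1).ne'
  unfold shellPrimitive
  fun_prop (disch := assumption)

theorem shellPrimitive_right (hp : 0 < p) (hpq : p < q) :
    shellPrimitive p q q = π * (p ^ 2 + q ^ 2 - 2 * p * q) / 8 := by
  have hq : q ≠ 0 := (hp.trans hpq).ne'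
  have hd : q ^ 2 - p ^ 2 ≠ 0 := by nlinarith
  have h₁ : (p ^ 2 + q ^ 2 - 2 * p ^ 2 * q ^ 2 / q ^ 2) / (q ^ 2 - p ^ 2) = 1 := by
    field_simp
    ring
  have h₂ : (2 * q ^ 2 - p ^ 2 - q ^ 2) / (q ^ 2 - p ^ 2) = 1 := by
    field_simp
    ring
  simp only [shellPrimitive, h₁, h₂, sub_self, zero_mul, sqrt_zero, arcsin_one]
  ring

theorem shellPrimitive_left (hp : 0 < p) (hpq : p < q) :
    shellPrimitive p q p = -(π * (p ^ 2 + q ^ 2 - 2 * p * q) / 8) := by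
  have hd : q ^ 2 - p ^ 2 ≠ 0 := by nlinarith
  have h₁ : (p ^ 2 + q ^ 2 - 2 * p ^ 2 * q ^ 2 / p ^ 2) / (q ^ 2 - p ^ 2) = -1 := by
    field_simp
    ring
  have h₂ : (2 * p ^ 2 - p ^ 2 - q ^ 2) / (q ^ 2 - p ^ 2) = -1 := by
    field_simp
    ring
  simp only [shellPrimitive, h₁, h₂, sub_self, mul_zero, sqrt_zero, arcsin_neg_one]
  ring

theorem integral_sqrt_shell_div_self (hp : 0 < p) (hpq : p < q) :
    ∫ r in p..q, √((q ^ 2 - r ^ 2) * (r ^ 2 - p ^ 2)) / r = π * (q - p) ^ 2 / 4 := by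
  have hintegrable : IntervalIntegrable (fun r => √((q ^ 2 - r ^ 2) * (r ^ 2 - p ^ 2)) / r)
      MeasureTheory.volume p q := by
    refine ContinuousOn.intervalIntegrable ?_
    have hr : ∀ r ∈ uIcc p q, r ≠ 0 := fun r hr =>
      (hp.trans_le (uIcc_of_le hpq.le ▸ hr).1).ne'
    fun_prop (disch := assumption)
  rw [integral_eq_sub_of_hasDerivAt_of_le hpq.le (continuousOn_shellPrimitive hp)
    (fun x hx => hasDerivAt_shellPrimitive hp hx.1 hx.2) hintegrable,
    shellPrimitive_right hp hpq, shellPrimitive_left hp hpq]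
  ring

end Shell

theorem sqrt_harmonic_radicand {ω Λ ξ rp ra r : ℝ} (hω : 0 ≤ ω) (hr : 0 < r)
    (hsum : ω ^ 2 * (rp ^ 2 + ra ^ 2) = 2 * ξ) (hprod : ω ^ 2 * (rp ^ 2 * ra ^ 2) = Λ ^ 2) :
    √(2 * ξ - ω ^ 2 * r ^ 2 - Λ ^ 2 / r ^ 2)
      = ω * (√((ra ^ 2 - r ^ 2) * (r ^ 2 - rp ^ 2)) / r) := by
  have h : 2 * ξ - ω ^ 2 * r ^ 2 - Λ ^ 2 / r ^ 2
      = (ω / r) ^ 2 * ((ra ^ 2 - r ^ 2) * (r ^ 2 - rp ^ 2)) := by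
    field_simp
    linear_combination (-r ^ 2) * hsum + hprod
  rw [h, sqrt_mul (sq_nonneg _), sqrt_sq (div_nonneg hω hr.le)]
  ring

theorem stmt_11_general (ω Λ ξ : ℝ) (hω : 0 < ω) (hΛ : 0 < Λ)
    (rp ra : ℝ) (hrp : 0 < rp) (hlt : rp < ra)
    (hroot_p : ω ^ 2 * (rp ^ 2) ^ 2 - 2 * ξ * rp ^ 2 + Λ ^ 2 = 0)
    (hroot_a : ω ^ 2 * (ra ^ 2) ^ 2 - 2 * ξ * ra ^ 2 + Λ ^ 2 = 0) :
    (1 / Real.pi) * ∫ r in rp..ra, Real.sqrt (2 * ξ - ω ^ 2 * r ^ 2 - Λ ^ 2 / r ^ 2)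
      = ξ / (2 * ω) - Λ / 2 := by
  have hra : 0 < ra := hrp.trans hlt
  obtain ⟨hsum, hprod⟩ := vieta_of_ne (by nlinarith) hroot_p hroot_a
  have hΛ_eq : ω * (rp * ra) = Λ :=
    (pow_left_inj₀ (by positivity) hΛ.le two_ne_zero).1 (by linear_combination hprod)
  have hintegrand : EqOn (fun r => √(2 * ξ - ω ^ 2 * r ^ 2 - Λ ^ 2 / r ^ 2))
      (fun r => ω * (√((ra ^ 2 - r ^ 2) * (r ^ 2 - rp ^ 2)) / r)) (uIcc rp ra) := fun r hr =>
    sqrt_harmonic_radicand hω.le (hrp.trans_le (uIcc_of_le hlt.le ▸ hr).1) hsum hprod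
  rw [integral_congr hintegrand, integral_const_mul, integral_sqrt_shell_div_self hrp hlt]
  field_simp
  linear_combination 2 * hsum - 4 * ω * hΛ_eq

/-- **harmonic radial action.** For `ω > 0`, `Λ > 0`, `ξ > ωΛ`, and
`0 < r_p < r_a` the positive reals whose squares are the two roots of
`ω²u² − 2ξu + Λ² = 0`, the harmonic radial action satisfies
`(1/π) ∫_{r_p}^{r_a} √(2ξ − ω²r² − Λ²/r²) dr = ξ/(2ω) − Λ/2`. -/
theorem stmt_11 (ω Λ ξ : ℝ) (hω : 0 < ω) (hΛ : 0 < Λ) (hξ : ω * Λ < ξ)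
    (rp ra : ℝ) (hrp : 0 < rp) (hlt : rp < ra)
    (hroot_p : ω ^ 2 * (rp ^ 2) ^ 2 - 2 * ξ * rp ^ 2 + Λ ^ 2 = 0)
    (hroot_a : ω ^ 2 * (ra ^ 2) ^ 2 - 2 * ξ * ra ^ 2 + Λ ^ 2 = 0) :
    (1 / Real.pi) * ∫ r in rp..ra, Real.sqrt (2 * ξ - ω ^ 2 * r ^ 2 - Λ ^ 2 / r ^ 2)
      = ξ / (2 * ω) - Λ / 2 :=
  stmt_11_general ω Λ ξ hω hΛ rp ra hrp hlt hroot_p hroot_a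
end

section
/- Let μ > 0, b > 0, Λ > 0 and ξ be real numbers, and set ψ_bo(r) = μ/(b + √(b² − r²)) for 0 < r < b. Suppose 0 < r_p < r_a < b are such that the radicand W(r) = 2(ξ − ψ_bo(r)) − Λ²/r² satisfies W(r_p) = W(r_a) = 0 and W(r) > 0 for all r ∈ (r_p, r_a). Define the radial period τ_r = 2·∫_{r_p}^{r_a} dr/√(W(r)) and the isochrone semi-major axis a = (√(b² − r_p²) + √(b² − r_a²))/2. Then the generalized Kepler third law holds: μ·τ_r² = 4π²·a³. -/
/-!
Multiplying the radicand by `r²` and substituting `w = √(b² - r²)` (so `r² = b² - w²`) turns it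
into a quadratic in `w`, `r² W = -2ξ w² + 2μ w + (2ξ b² - 2μ b - Λ²)`, whose roots are
`w_p = √(b² - r_p²)` and `w_a = √(b² - r_a²)`. By Vieta `μ = ξ (w_p + w_a) = 2ξ a` and
`r² W = 2ξ (w_p - w)(w - w_a)`. As `dw = -r dr / w`, the radial period becomes
`(2 / √(2ξ)) ∫_{w_a}^{w_p} w dw / √((w_p - w)(w - w_a)) = 2π a / √(2ξ)`, so
`μ τ_r² = 2ξ a · 4π² a² / (2ξ) = 4π² a³`.
-/

open intervalIntegral Real Set

section Quadratic

variable {R : Type*} [CommRing R] [IsDomain R] {A B C x y : R}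

theorem quadratic_sum_roots (hxy : x ≠ y) (hx : A * x ^ 2 + B * x + C = 0)
    (hy : A * y ^ 2 + B * y + C = 0) : A * (x + y) = -B := by
  have h : (x - y) * (A * (x + y) + B) = 0 := by linear_combination hx - hy
  linear_combination (mul_eq_zero.mp h).resolve_left (sub_ne_zero.mpr hxy)

theorem quadratic_eq_mul_sub_mul_sub (hxy : x ≠ y) (hx : A * x ^ 2 + B * x + C = 0)
    (hy : A * y ^ 2 + B * y + C = 0) (z : R) :
    A * z ^ 2 + B * z + C = A * (z - x) * (z - y) := by
  linear_combination (z - x) * quadratic_sum_roots hxy hx hy + hx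

end Quadratic

/-- Found through the eccentric anomaly `η`, `w = (α + β) / 2 - (β - α) / 2 * cos η`, in which
`w dw / √((β - w) * (w - α)) = ((α + β) / 2 - (β - α) / 2 * cos η) dη`. -/
noncomputable def keplerPrimitive (α β w : ℝ) : ℝ :=
  -((α + β) / 2) * arcsin ((2 * w - (α + β)) / (β - α)) + √((β - w) * (w - α))

theorem continuous_keplerPrimitive (α β : ℝ) : Continuous (keplerPrimitive α β) := by
  unfold keplerPrimitive; fun_prop

theorem keplerPrimitive_left_sub_right {α β : ℝ} (h : α < β) :
    keplerPrimitive α β α - keplerPrimitive α β β = π * ((α + β) / 2) := by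
  have hne : β - α ≠ 0 := (sub_pos.mpr h).ne'
  have hα : (2 * α - (α + β)) / (β - α) = -1 := by field_simp; ring
  have hβ : (2 * β - (α + β)) / (β - α) = 1 := by field_simp; ring
  simp only [keplerPrimitive, hα, hβ, arcsin_neg_one, arcsin_one, sub_self, mul_zero, zero_mul,
    sqrt_zero]
  ring

theorem hasDerivAt_keplerPrimitive {α β w : ℝ} (hα : α < w) (hβ : w < β) :
    HasDerivAt (keplerPrimitive α β) (-w / √((β - w) * (w - α))) w := by
  have hP : 0 < (β - w) * (w - α) := mul_pos (by linarith) (by linarith)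
  have hd : 0 < β - α := by linarith
  set u := (2 * w - (α + β)) / (β - α)
  have hu : 1 - u ^ 2 = (2 / (β - α)) ^ 2 * ((β - w) * (w - α)) := by
    simp only [u]; field_simp; ring
  have hu₁ : u < 1 := by simp only [u]; rw [div_lt_one hd]; linarith
  have hu₂ : -1 < u := by simp only [u]; rw [lt_div_iff₀ hd]; linarith
  have hsq : √(1 - u ^ 2) = 2 / (β - α) * √((β - w) * (w - α)) := by
    rw [hu, sqrt_mul (by positivity), sqrt_sq (by positivity)]
  have harc := (hasDerivAt_arcsin hu₂.ne' hu₁.ne).comp w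
    (((hasDerivAt_id w).const_mul 2).sub_const (α + β) |>.div_const (β - α))
  have hroot := (hasDerivAt_sqrt hP.ne').comp w
    (((hasDerivAt_id w).const_sub β).mul ((hasDerivAt_id w).sub_const α))
  refine ((harc.const_mul (-((α + β) / 2))).add hroot).congr_deriv ?_
  simp only [id, hsq]
  have := sqrt_pos.mpr hP
  field_simp
  ring

theorem integral_isochrone_radial {b rp ra : ℝ} (hrp : 0 ≤ rp) (hlt : rp < ra) (hra : ra ≤ b) :
    ∫ r in rp..ra, r / √((√(b ^ 2 - rp ^ 2) - √(b ^ 2 - r ^ 2)) * (√(b ^ 2 - r ^ 2) - √(b ^ 2 - ra ^ 2)))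
      = π * ((√(b ^ 2 - rp ^ 2) + √(b ^ 2 - ra ^ 2)) / 2) := by
  set F := fun r => keplerPrimitive (√(b ^ 2 - ra ^ 2)) (√(b ^ 2 - rp ^ 2)) (√(b ^ 2 - r ^ 2))
  have hcont : ContinuousOn F (Icc rp ra) :=
    ((continuous_keplerPrimitive _ _).comp (by fun_prop)).continuousOn
  have hderiv : ∀ r ∈ Ioo rp ra, HasDerivAt F
      (r / √((√(b ^ 2 - rp ^ 2) - √(b ^ 2 - r ^ 2)) * (√(b ^ 2 - r ^ 2) - √(b ^ 2 - ra ^ 2)))) r := by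
    rintro r ⟨h₁, h₂⟩
    have hr : 0 < r := hrp.trans_lt h₁
    have hQ : 0 < b ^ 2 - r ^ 2 := by nlinarith
    have hα : √(b ^ 2 - ra ^ 2) < √(b ^ 2 - r ^ 2) := sqrt_lt_sqrt (by nlinarith) (by nlinarith)
    have hβ : √(b ^ 2 - r ^ 2) < √(b ^ 2 - rp ^ 2) := sqrt_lt_sqrt hQ.le (by nlinarith)
    have hw : HasDerivAt (fun r => √(b ^ 2 - r ^ 2)) (-r / √(b ^ 2 - r ^ 2)) r :=
      (((hasDerivAt_pow 2 r).const_sub (b ^ 2)).sqrt hQ.ne').congr_deriv (by field_simp; ring)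
    refine ((hasDerivAt_keplerPrimitive hα hβ).comp r hw).congr_deriv ?_
    rw [neg_div, neg_div, neg_mul_neg, div_mul_div_comm, mul_comm _ r,
      mul_div_mul_right _ _ (sqrt_pos.mpr hQ).ne']
  have hpos : ∀ r ∈ Ioo rp ra, 0 ≤
      r / √((√(b ^ 2 - rp ^ 2) - √(b ^ 2 - r ^ 2)) * (√(b ^ 2 - r ^ 2) - √(b ^ 2 - ra ^ 2))) :=
    fun r hr => div_nonneg (hrp.trans hr.1.le) (sqrt_nonneg _)
  rw [integral_eq_sub_of_hasDerivAt_of_le hlt.le hcont hderiv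
    (intervalIntegrable_deriv_of_nonneg (by rwa [uIcc_of_le hlt.le])
      (by simpa only [min_eq_left hlt.le, max_eq_right hlt.le]) 
      (by simpa only [min_eq_left hlt.le, max_eq_right hlt.le])), add_comm]
  exact keplerPrimitive_left_sub_right (sqrt_lt_sqrt (by nlinarith) (by nlinarith))

theorem sq_mul_boundedIsochrone_radicand {μ b Λ ξ r : ℝ} (hr : 0 < r) (hrb : r ≤ b) :
    r ^ 2 * (2 * (ξ - μ / (b + √(b ^ 2 - r ^ 2))) - Λ ^ 2 / r ^ 2) =
      -2 * ξ * √(b ^ 2 - r ^ 2) ^ 2 + 2 * μ * √(b ^ 2 - r ^ 2) + (2 * ξ * b ^ 2 - 2 * μ * b - Λ ^ 2) := by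
  have hw : √(b ^ 2 - r ^ 2) ^ 2 = b ^ 2 - r ^ 2 := sq_sqrt (by nlinarith)
  have : 0 < b + √(b ^ 2 - r ^ 2) := by have := hr.trans_le hrb; positivity
  field_simp
  linear_combination (2 * (ξ * (b + √(b ^ 2 - r ^ 2)) - μ)) * hw

theorem stmt_17_general (μ b Λ ξ : ℝ) (hμ : 0 < μ)
    (rp ra : ℝ) (hrp : 0 < rp) (hlt : rp < ra) (hra : ra < b)
    (W : ℝ → ℝ)
    (hW : ∀ r : ℝ, W r = 2 * (ξ - μ / (b + Real.sqrt (b ^ 2 - r ^ 2))) - Λ ^ 2 / r ^ 2)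
    (hWp : W rp = 0) (hWa : W ra = 0)
    (τr a : ℝ)
    (hτ : τr = 2 * ∫ r in rp..ra, 1 / Real.sqrt (W r))
    (ha : a = (Real.sqrt (b ^ 2 - rp ^ 2) + Real.sqrt (b ^ 2 - ra ^ 2)) / 2) :
    μ * τr ^ 2 = 4 * Real.pi ^ 2 * a ^ 3 := by
  set w : ℝ → ℝ := fun r => √(b ^ 2 - r ^ 2)
  set q : ℝ → ℝ := fun z => -2 * ξ * z ^ 2 + 2 * μ * z + (2 * ξ * b ^ 2 - 2 * μ * b - Λ ^ 2)
  have hWq : ∀ r ∈ Icc rp ra, r ^ 2 * W r = q (w r) := fun r hr => by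
    rw [hW]; exact sq_mul_boundedIsochrone_radicand (hrp.trans_le hr.1) (hr.2.trans hra.le)
  have hrootp : q (w rp) = 0 := by rw [← hWq rp ⟨le_rfl, hlt.le⟩, hWp, mul_zero]
  have hroota : q (w ra) = 0 := by rw [← hWq ra ⟨hlt.le, le_rfl⟩, hWa, mul_zero]
  have hne : w rp ≠ w ra := (sqrt_lt_sqrt (by nlinarith) (by nlinarith)).ne'
  -- Vieta: the semi-major axis is half the sum of the roots of `q`
  have ha' : a = (w rp + w ra) / 2 := ha
  have hμa : μ = 2 * ξ * a := by
    linear_combination quadratic_sum_roots hne hrootp hroota / 2 - 2 * ξ * ha'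
  have hξ : 0 < ξ := by
    have hwp : 0 < w rp := sqrt_pos.mpr (by nlinarith)
    have : 0 < a := by rw [ha']; positivity
    nlinarith
  have hint : ∫ r in rp..ra, 1 / √(W r) = 1 / √(2 * ξ) *
      ∫ r in rp..ra, r / √((w rp - w r) * (w r - w ra)) := by
    rw [← integral_const_mul]
    refine integral_congr fun r hr => ?_
    rw [uIcc_of_le hlt.le] at hr
    have hr0 : 0 < r := hrp.trans_le hr.1
    have hWr : W r = 2 * ξ * ((w rp - w r) * (w r - w ra)) / r ^ 2 := by
      rw [eq_div_iff (by positivity), mul_comm, hWq r hr]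
      exact (quadratic_eq_mul_sub_mul_sub hne hrootp hroota (w r)).trans (by ring)
    rw [hWr, sqrt_div' _ (by positivity), sqrt_mul (by positivity), sqrt_sq hr0.le, one_div_div]
    ring
  rw [hτ, hint, integral_isochrone_radial hrp.le hlt hra.le, ← ha]
  have : √(2 * ξ) ^ 2 = 2 * ξ := sq_sqrt (by positivity)
  field_simp
  linear_combination 4 * a ^ 2 * hμa - 4 * a ^ 3 * this

/-- **generalized Kepler third law for the bounded potential.** For the
bounded isochrone potential `ψ_bo(r) = μ/(b + √(b² − r²))` on `(0,b)` with `μ, b > 0`, a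
radially periodic orbit of energy `ξ` and angular momentum `Λ > 0` with periastron `r_p`
and apoastron `r_a`, `0 < r_p < r_a < b` (zeros of the radicand
`W(r) = 2(ξ − ψ_bo(r)) − Λ²/r²`, positive in between), radial period
`τ_r = 2∫_{r_p}^{r_a} dr/√(W(r))` and isochrone semi-major axis
`a = (√(b² − r_p²) + √(b² − r_a²))/2` satisfies `μ τ_r² = 4π² a³`. -/
theorem stmt_17 (μ b Λ ξ : ℝ) (hμ : 0 < μ) (hb : 0 < b) (hΛ : 0 < Λ)
    (rp ra : ℝ) (hrp : 0 < rp) (hlt : rp < ra) (hra : ra < b)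
    (W : ℝ → ℝ)
    (hW : ∀ r : ℝ, W r = 2 * (ξ - μ / (b + Real.sqrt (b ^ 2 - r ^ 2))) - Λ ^ 2 / r ^ 2)
    (hWp : W rp = 0) (hWa : W ra = 0)
    (hWpos : ∀ r ∈ Set.Ioo rp ra, 0 < W r)
    (τr a : ℝ)
    (hτ : τr = 2 * ∫ r in rp..ra, 1 / Real.sqrt (W r))
    (ha : a = (Real.sqrt (b ^ 2 - rp ^ 2) + Real.sqrt (b ^ 2 - ra ^ 2)) / 2) :
    μ * τr ^ 2 = 4 * Real.pi ^ 2 * a ^ 3 :=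
  stmt_17_general μ b Λ ξ hμ rp ra hrp hlt hra W hW hWp hWa τr a hτ ha
end
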